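/- arXiv:1609.04414 — 2 statements merged into one kernel-verified Lean document; each statement's English description precedes it below -/
import Mathlib

section
/- Let N ≥ 1 be an integer, let g be a polynomial with real coefficients, and let f be a polynomial such that g(t) − (1/(2π)) ∫_{−2}^{2} g(s) √(4 − s²) ds = (t² − 4) f'(t) + 3 t f(t) for all real t. Then ∫_{−∞}^{∞} g(t) p_N(t) dt = (1/(2π)) ∫_{−2}^{2} g(s) √(4 − s²) ds + (1/N²) ∫_{−∞}^{∞} f'''(t) p_N(t) dt. -/
open MeasureTheory Real Filter Finset Polynomial intervalIntegral

/-- Hermite polynomials with parameter `N`. -/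
noncomputable def hermN (N k : ℕ) (x : ℝ) : ℝ :=
  (-1 : ℝ) ^ k * Real.exp (N * x ^ 2 / 2) *
    iteratedDeriv k (fun y : ℝ => Real.exp (-(N * y ^ 2) / 2)) x

/-- Normalized Hermite polynomials. -/
noncomputable def htilde (N k : ℕ) (x : ℝ) : ℝ :=
  hermN N k x / Real.sqrt (k.factorial * N ^ k * Real.sqrt (2 * Real.pi / N))

/-- The mean eigenvalue density of the GUE(N) ensemble. -/
noncomputable def gueDensity (N : ℕ) (t : ℝ) : ℝ :=
  (1 / N) * Real.exp (-(N * t ^ 2) / 2) * ∑ k ∈ Finset.range N, (htilde N k t) ^ 2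

/-
Write `w = e^{-N t²/2}` and `D q = q' - N t q`, so that `(q w)' = (D q) w` and integration by parts
reads `∫ (D q) w = 0`. The Hermite polynomials are `h_{k+1} = -D h_k`, and
`σ = Σ_{k<N} h_k² / (k! N^k)` satisfies `σ w = N √(2π/N) p_N`. By the Christoffel–Darboux formula
`σ` is a quadratic form in `h_{N-1}, h_N` only, and differentiating that form shows that `σ` solves
the third order equation `D³σ = N² (t² - 4) Dσ - N² t σ`. Moving the three derivatives of
`f''' σ w` onto `σ` and using this equation gives `∫ f''' σ w = N² ∫ ((t² - 4) f' + 3 t f) σ w`,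
which together with `∫ σ w = N √(2π/N)` is the claim.
-/

noncomputable def gaussWeight (a t : ℝ) : ℝ := exp (-(a * t ^ 2) / 2)

noncomputable def gaussIntegral (a : ℝ) (q : ℝ[X]) : ℝ := ∫ t, q.eval t * gaussWeight a t

-- `(q * gaussWeight a)' = gaussDeriv a q * gaussWeight a`
noncomputable def gaussDeriv (a : ℝ) (q : ℝ[X]) : ℝ[X] := derivative q - C a * X * q

noncomputable def scaledHermite (a : ℝ) : ℕ → ℝ[X]
  | 0 => 1
  | k + 1 => -gaussDeriv a (scaledHermite a k)

noncomputable def hermiteKernel (a : ℝ) (n : ℕ) : ℝ[X] :=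
  ∑ k ∈ range n, C ((k.factorial * a ^ k)⁻¹) * scaledHermite a k ^ 2

noncomputable def christoffelDarbouxForm (a c : ℝ) (p q : ℝ[X]) : ℝ[X] :=
  C c * p ^ 2 - C a * X * p * q + q ^ 2

section

variable {a : ℝ}

lemma gaussDeriv_add (p q : ℝ[X]) :
    gaussDeriv a (p + q) = gaussDeriv a p + gaussDeriv a q := by
  simp only [gaussDeriv, derivative_add]; ring

lemma gaussDeriv_sub (p q : ℝ[X]) :
    gaussDeriv a (p - q) = gaussDeriv a p - gaussDeriv a q := by
  simp only [gaussDeriv, derivative_sub]; ring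

lemma gaussDeriv_C_mul (c : ℝ) (q : ℝ[X]) : gaussDeriv a (C c * q) = C c * gaussDeriv a q := by
  simp only [gaussDeriv, derivative_mul, derivative_C]; ring

lemma gaussDeriv_mul (p q : ℝ[X]) :
    gaussDeriv a (p * q) = derivative p * q + p * gaussDeriv a q := by
  simp only [gaussDeriv, derivative_mul]; ring

lemma gaussDeriv_scaledHermite (k : ℕ) :
    gaussDeriv a (scaledHermite a k) = -scaledHermite a (k + 1) := by
  rw [scaledHermite, neg_neg]

lemma derivative_scaledHermite_succ (k : ℕ) :
    derivative (scaledHermite a (k + 1)) = C ((k + 1) * a) * scaledHermite a k := by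
  induction k with
  | zero => simp [scaledHermite, gaussDeriv]
  | succ k ih =>
    rw [scaledHermite, gaussDeriv]
    simp only [derivative_neg, derivative_sub, derivative_mul, derivative_C, derivative_X, ih]
    rw [scaledHermite, gaussDeriv]
    simp only [map_mul, map_add, map_natCast, map_one, Nat.cast_add, Nat.cast_one]
    ring

lemma scaledHermite_add_two (n : ℕ) :
    scaledHermite a (n + 2) =
      C a * X * scaledHermite a (n + 1) - C ((n + 1) * a) * scaledHermite a n := by
  rw [scaledHermite, gaussDeriv, derivative_scaledHermite_succ]; ring

/-- Christoffel–Darboux formula on the diagonal. -/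
lemma C_mul_hermiteKernel_succ (ha : a ≠ 0) (n : ℕ) :
    C a * hermiteKernel a (n + 1) = C ((n.factorial * a ^ n)⁻¹) *
      christoffelDarbouxForm a ((n + 1) * a) (scaledHermite a n) (scaledHermite a (n + 1)) := by
  unfold christoffelDarbouxForm
  induction n with
  | zero => simp [hermiteKernel, scaledHermite, gaussDeriv]; ring
  | succ n ih =>
    have hd : ((n.factorial : ℝ) * a ^ n)⁻¹ =
        ((n + 1).factorial * a ^ (n + 1))⁻¹ * ((n + 1) * a) := by
      push_cast [Nat.factorial_succ]; field_simp; ring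
    rw [hermiteKernel, sum_range_succ, ← hermiteKernel, mul_add, ih, hd, scaledHermite_add_two]
    simp only [map_mul, map_add, map_natCast, map_one, Nat.cast_add, Nat.cast_one]
    ring

-- `p, q` play the roles of `scaledHermite a n, scaledHermite a (n + 1)`, and `c = (n + 1) a`.
section ChristoffelDarbouxForm

variable {c : ℝ} {p q : ℝ[X]} (hp : gaussDeriv a p = -q) (hq : derivative q = C c * p)
include hp hq

lemma gaussDeriv_christoffelDarbouxForm :
    gaussDeriv a (christoffelDarbouxForm a c p q) = -(C a * p * q) := by
  have hp' : derivative p = C a * X * p - q := by rw [gaussDeriv] at hp; linear_combination hp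
  simp only [christoffelDarbouxForm, gaussDeriv, sq, derivative_add, derivative_sub,
    derivative_mul, hp', hq, derivative_C, derivative_X]
  ring

lemma gaussDeriv_three_christoffelDarbouxForm :
    gaussDeriv a (gaussDeriv a (gaussDeriv a (christoffelDarbouxForm a c p q))) =
      (C a ^ 2 * X ^ 2 - 4 * C c) * gaussDeriv a (christoffelDarbouxForm a c p q)
        - C a ^ 2 * X * christoffelDarbouxForm a c p q := by
  have hp' : derivative p = C a * X * p - q := by rw [gaussDeriv] at hp; linear_combination hp
  rw [gaussDeriv_christoffelDarbouxForm hp hq, christoffelDarbouxForm]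
  simp only [gaussDeriv, sq, derivative_add, derivative_sub, derivative_mul, derivative_neg, hp',
    hq, derivative_C, derivative_X, derivative_zero]
  ring

end ChristoffelDarbouxForm

lemma hermiteKernel_ode (ha : a ≠ 0) (m : ℕ) :
    gaussDeriv a (gaussDeriv a (gaussDeriv a (hermiteKernel a m))) =
      (C a ^ 2 * X ^ 2 - 4 * C (m * a)) * gaussDeriv a (hermiteKernel a m)
        - C a ^ 2 * X * hermiteKernel a m := by
  cases m with
  | zero => simp [hermiteKernel, gaussDeriv]
  | succ n =>
    have hσ : hermiteKernel a (n + 1) = C (a⁻¹ * (n.factorial * a ^ n)⁻¹) *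
        christoffelDarbouxForm a ((n + 1) * a) (scaledHermite a n) (scaledHermite a (n + 1)) := by
      rw [map_mul, mul_assoc, ← C_mul_hermiteKernel_succ ha, ← mul_assoc, ← map_mul,
        inv_mul_cancel₀ ha, map_one, one_mul]
    rw [hσ, gaussDeriv_C_mul, gaussDeriv_C_mul, gaussDeriv_C_mul,
      gaussDeriv_three_christoffelDarbouxForm (gaussDeriv_scaledHermite n)
        (derivative_scaledHermite_succ n)]
    push_cast
    ring

lemma hasDerivAt_eval_mul_gaussWeight (q : ℝ[X]) (t : ℝ) :
    HasDerivAt (fun t => q.eval t * gaussWeight a t)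
      ((gaussDeriv a q).eval t * gaussWeight a t) t := by
  have hexp : HasDerivAt (fun t => -(a * t ^ 2) / 2) (-(a * t)) t :=
    (((hasDerivAt_pow 2 t).const_mul a).neg.div_const 2).congr_deriv (by norm_num; ring)
  have hw : HasDerivAt (gaussWeight a) (gaussWeight a t * -(a * t)) t := hexp.exp
  refine ((q.hasDerivAt t).mul hw).congr_deriv ?_
  simp only [gaussDeriv, eval_sub, eval_mul, eval_C, eval_X]
  ring

lemma gaussWeight_eq_exp_neg_mul_sq (a : ℝ) :
    gaussWeight a = fun t => exp (-(a / 2) * t ^ 2) := by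
  ext t; rw [gaussWeight]; ring_nf

lemma integrable_eval_mul_gaussWeight (ha : 0 < a) (q : ℝ[X]) :
    Integrable fun t => q.eval t * gaussWeight a t := by
  simp_rw [gaussWeight_eq_exp_neg_mul_sq, eval_eq_sum_range, sum_mul]
  refine integrable_finsetSum _ fun i _ => ?_
  have hi : -1 < (i : ℝ) := neg_one_lt_zero.trans_le i.cast_nonneg
  simpa [mul_assoc, Real.rpow_natCast] using
    (integrable_rpow_mul_exp_neg_mul_sq (half_pos ha) hi).const_mul (q.coeff i)

lemma gaussIntegral_gaussDeriv (ha : 0 < a) (q : ℝ[X]) : gaussIntegral a (gaussDeriv a q) = 0 :=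
  integral_eq_zero_of_hasDerivAt_of_integrable (hasDerivAt_eval_mul_gaussWeight q)
    (integrable_eval_mul_gaussWeight ha _) (integrable_eval_mul_gaussWeight ha q)

lemma gaussIntegral_add (ha : 0 < a) (p q : ℝ[X]) :
    gaussIntegral a (p + q) = gaussIntegral a p + gaussIntegral a q := by
  simp only [gaussIntegral, eval_add, add_mul]
  exact integral_add (integrable_eval_mul_gaussWeight ha p) (integrable_eval_mul_gaussWeight ha q)

lemma gaussIntegral_sub (ha : 0 < a) (p q : ℝ[X]) :
    gaussIntegral a (p - q) = gaussIntegral a p - gaussIntegral a q := by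
  simp only [gaussIntegral, eval_sub, sub_mul]
  exact integral_sub (integrable_eval_mul_gaussWeight ha p) (integrable_eval_mul_gaussWeight ha q)

lemma gaussIntegral_neg (q : ℝ[X]) : gaussIntegral a (-q) = -gaussIntegral a q := by
  simp only [gaussIntegral, eval_neg, neg_mul, MeasureTheory.integral_neg]

lemma gaussIntegral_C_mul (c : ℝ) (q : ℝ[X]) :
    gaussIntegral a (C c * q) = c * gaussIntegral a q := by
  simp only [gaussIntegral, eval_mul, eval_C, mul_assoc]
  exact integral_const_mul c _

lemma gaussIntegral_sum (ha : 0 < a) {ι : Type*} (s : Finset ι) (q : ι → ℝ[X]) :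
    gaussIntegral a (∑ i ∈ s, q i) = ∑ i ∈ s, gaussIntegral a (q i) := by
  simp only [gaussIntegral, eval_finsetSum, sum_mul]
  exact integral_finsetSum s fun i _ => integrable_eval_mul_gaussWeight ha (q i)

lemma gaussIntegral_derivative_mul (ha : 0 < a) (p q : ℝ[X]) :
    gaussIntegral a (derivative p * q) = -gaussIntegral a (p * gaussDeriv a q) := by
  have h := gaussIntegral_gaussDeriv ha (p * q)
  rw [gaussDeriv_mul, gaussIntegral_add ha] at h
  linarith

lemma gaussIntegral_one (ha : 0 < a) : gaussIntegral a 1 = √(2 * π / a) := by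
  simp only [gaussIntegral, eval_one, one_mul, gaussWeight_eq_exp_neg_mul_sq, integral_gaussian]
  congr 1
  field_simp

lemma gaussIntegral_scaledHermite_sq (ha : 0 < a) (k : ℕ) :
    gaussIntegral a (scaledHermite a k ^ 2) = k.factorial * a ^ k * √(2 * π / a) := by
  induction k with
  | zero => simpa [scaledHermite] using gaussIntegral_one ha
  | succ k ih =>
    calc gaussIntegral a (scaledHermite a (k + 1) ^ 2)
        = -gaussIntegral a (scaledHermite a (k + 1) * gaussDeriv a (scaledHermite a k)) := by
          rw [gaussDeriv_scaledHermite, mul_neg, gaussIntegral_neg, neg_neg, sq]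
      _ = gaussIntegral a (derivative (scaledHermite a (k + 1)) * scaledHermite a k) := by
          rw [gaussIntegral_derivative_mul ha]
      _ = (k + 1) * a * gaussIntegral a (scaledHermite a k ^ 2) := by
          rw [derivative_scaledHermite_succ, mul_assoc, gaussIntegral_C_mul, sq]
      _ = (k + 1).factorial * a ^ (k + 1) * √(2 * π / a) := by
          rw [ih, Nat.factorial_succ]; push_cast; ring

lemma gaussIntegral_hermiteKernel (ha : 0 < a) (m : ℕ) :
    gaussIntegral a (hermiteKernel a m) = m * √(2 * π / a) := by
  simp only [hermiteKernel, gaussIntegral_sum ha, gaussIntegral_C_mul,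
    gaussIntegral_scaledHermite_sq ha]
  rw [sum_congr rfl fun k _ => inv_mul_cancel_left₀ (by positivity) _]
  simp

lemma iterate_derivative_mul_sub_eq_gaussDeriv {c : ℝ} {σ : ℝ[X]}
    (hσ : gaussDeriv a (gaussDeriv a (gaussDeriv a σ)) =
      (C a ^ 2 * X ^ 2 - 4 * C c) * gaussDeriv a σ - C a ^ 2 * X * σ) (f : ℝ[X]) :
    derivative^[3] f * σ
        - ((C a ^ 2 * X ^ 2 - 4 * C c) * derivative f + 3 * C a ^ 2 * X * f) * σ =
      gaussDeriv a (derivative (derivative f) * σ - derivative f * gaussDeriv a σ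
        + f * gaussDeriv a (gaussDeriv a σ) - f * (C a ^ 2 * X ^ 2 - 4 * C c) * σ) := by
  simp only [gaussDeriv_sub, gaussDeriv_add, gaussDeriv_mul, hσ, Function.iterate_succ_apply',
    Function.iterate_zero_apply, derivative_mul, derivative_sub, derivative_pow, derivative_C,
    derivative_X, derivative_ofNat, Nat.cast_ofNat, C_ofNat, mul_zero]
  ring

lemma gaussIntegral_iterate_derivative_mul_hermiteKernel (ha : 0 < a) (m : ℕ) (f : ℝ[X]) :
    gaussIntegral a (derivative^[3] f * hermiteKernel a m) = gaussIntegral a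
      (((C a ^ 2 * X ^ 2 - 4 * C (m * a)) * derivative f + 3 * C a ^ 2 * X * f) *
        hermiteKernel a m) := by
  rw [← sub_eq_zero, ← gaussIntegral_sub ha,
    iterate_derivative_mul_sub_eq_gaussDeriv (hermiteKernel_ode ha.ne' m),
    gaussIntegral_gaussDeriv ha]

lemma iteratedDeriv_gaussWeight (k : ℕ) :
    iteratedDeriv k (gaussWeight a) =
      fun x => (-1) ^ k * ((scaledHermite a k).eval x * gaussWeight a x) := by
  induction k with
  | zero => ext x; simp [scaledHermite]
  | succ k ih =>
    ext x
    rw [iteratedDeriv_succ, ih,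
      ((hasDerivAt_eval_mul_gaussWeight (scaledHermite a k) x).const_mul _).deriv,
      gaussDeriv_scaledHermite, eval_neg]
    ring

end

lemma hermN_eq_eval_scaledHermite (N k : ℕ) (x : ℝ) :
    hermN N k x = (scaledHermite N k).eval x := by
  have hw : exp (N * x ^ 2 / 2) * gaussWeight N x = 1 := by
    rw [gaussWeight, ← exp_add, ← exp_zero]; ring_nf
  have hs : ((-1 : ℝ) ^ k) ^ 2 = 1 := by rw [pow_right_comm, neg_one_sq, one_pow]
  rw [hermN, show (fun y : ℝ => exp (-(N * y ^ 2) / 2)) = gaussWeight N from rfl,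
    iteratedDeriv_gaussWeight]
  linear_combination (scaledHermite N k).eval x * (((-1) ^ k) ^ 2 * hw + hs)

lemma gueDensity_eq {N : ℕ} (hN : 0 < (N : ℝ)) (t : ℝ) :
    gueDensity N t = (hermiteKernel N N).eval t * gaussWeight N t / (N * √(2 * π / N)) := by
  have hsum : ∑ k ∈ range N, htilde N k t ^ 2 = (hermiteKernel N N).eval t / √(2 * π / N) := by
    simp only [htilde, hermN_eq_eval_scaledHermite, div_pow, hermiteKernel, eval_finsetSum,
      eval_mul, eval_C, eval_pow, sum_div]
    refine sum_congr rfl fun k _ => ?_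
    rw [sq_sqrt (by positivity)]
    field_simp
  rw [gueDensity, hsum, gaussWeight]
  field_simp

lemma integral_eval_mul_gueDensity {N : ℕ} (hN : 0 < (N : ℝ)) (q : ℝ[X]) :
    ∫ t, q.eval t * gueDensity N t =
      gaussIntegral N (q * hermiteKernel N N) / gaussIntegral N (hermiteKernel N N) := by
  rw [gaussIntegral_hermiteKernel hN, gaussIntegral, ← MeasureTheory.integral_div]
  congr 1 with t
  rw [gueDensity_eq hN, eval_mul]
  ring

theorem one_step_expansion (N : ℕ) (hN : 1 ≤ N) (g f : Polynomial ℝ)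
    (hfg : ∀ t : ℝ,
      g.eval t - (1 / (2 * Real.pi)) * ∫ s in (-2 : ℝ)..2, g.eval s * Real.sqrt (4 - s ^ 2) =
        (t ^ 2 - 4) * (Polynomial.derivative f).eval t + 3 * t * f.eval t) :
    (∫ t : ℝ, g.eval t * gueDensity N t) =
      (1 / (2 * Real.pi)) * (∫ s in (-2 : ℝ)..2, g.eval s * Real.sqrt (4 - s ^ 2)) +
        (1 / (N : ℝ) ^ 2) *
          ∫ t : ℝ, ((Polynomial.derivative^[3] f).eval t) * gueDensity N t := by
  have hN' : 0 < (N : ℝ) := by exact_mod_cast hN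
  set c := (1 / (2 * π)) * ∫ s in (-2 : ℝ)..2, g.eval s * √(4 - s ^ 2)
  have hg : g = C c + ((X ^ 2 - 4) * derivative f + 3 * X * f) :=
    Polynomial.funext fun t => by
      simp only [eval_add, eval_mul, eval_sub, eval_pow, eval_C, eval_X, eval_ofNat]
      linear_combination hfg t
  have hloop : gaussIntegral N (derivative^[3] f * hermiteKernel N N) =
      N ^ 2 * gaussIntegral N (((X ^ 2 - 4) * derivative f + 3 * X * f) * hermiteKernel N N) := by
    rw [gaussIntegral_iterate_derivative_mul_hermiteKernel hN', ← gaussIntegral_C_mul]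
    congr 1
    simp only [map_mul, map_pow, map_natCast]
    ring
  have hZ : gaussIntegral N (hermiteKernel N N) ≠ 0 := by
    rw [gaussIntegral_hermiteKernel hN']; positivity
  rw [integral_eval_mul_gueDensity hN', integral_eval_mul_gueDensity hN', hloop, hg, add_mul,
    gaussIntegral_add hN', gaussIntegral_C_mul]
  field_simp
end

section
/- For every K > 0 there exists N₀ = N₀(K) such that for every integer N > N₀ there exists a constant C (depending on K and N) with the following property: for every sequence (a_n)_{n≥0} of complex numbers with M := sup_{n ≥ 1} |a_n| (n/K)^{n/2} ∨ |a₀| < ∞, the series f(t) = Σ_{n=0}^{∞} a_n f_n(t) converges for every real t, the integral ∫_{−∞}^{∞} |f(t)| p_N(t) dt is finite, and |∫_{−∞}^{∞} f(t) p_N(t) dt| ≤ C · M. -/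
/-!
Expanding the Gegenbauer polynomial gives `|f_n(t)| ≤ (8 (1 + |t|))^n`. Together with
`|a_n| ≤ M (K/n)^{n/2}` and `n! ≤ n^n` this dominates the series termwise by
`M e^{2K (8(1+|t|))²} 2^{-n}`, so `|f(t)| ≤ 2 e^{256K} M e^{256K t²}`. The normalized Hermite
functions are polynomials, so `e^{256K t²} p_N(t)` is a polynomial times a Gaussian, integrable
as soon as `N > 512 K`; its integral gives the constant `C`.
-/

open MeasureTheory Real Filter Finset

/-- The rescaled Gegenbauer polynomial with parameter 2: `f_n(x) = C_n^{(2)}(x/2)`. -/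
noncomputable def gegen (n : ℕ) (x : ℝ) : ℝ :=
  ∑ k ∈ Finset.range (n / 2 + 1),
    (-1 : ℝ) ^ k * (((n - k + 1).factorial : ℝ) / (k.factorial * (n - 2 * k).factorial)) *
      x ^ (n - 2 * k)

lemma gegen_zero (t : ℝ) : gegen 0 t = 1 := by simp [gegen]

lemma continuous_gegen (n : ℕ) : Continuous (gegen n) := by
  unfold gegen; fun_prop

open Nat in
lemma factorial_sub_add_one_le {n k : ℕ} (hk : 2 * k ≤ n) :
    (n - k + 1)! ≤ 4 ^ n * (k ! * (n - 2 * k)!) := by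
  have hchoose : (n - k).choose k * (k ! * (n - 2 * k)!) = (n - k)! := by
    rw [← Nat.choose_mul_factorial_mul_factorial (show k ≤ n - k by omega),
      show n - k - k = n - 2 * k by omega, mul_assoc]
  have hsucc : n - k + 1 ≤ 2 ^ n := (n - k).lt_two_pow_self.trans_le
    (Nat.pow_le_pow_right two_pos (by omega))
  have hchoose_le : (n - k).choose k ≤ 2 ^ n :=
    (Nat.choose_le_two_pow _ _).trans (Nat.pow_le_pow_right two_pos (by omega))
  calc (n - k + 1)! = (n - k + 1) * (n - k).choose k * (k ! * (n - 2 * k)!) := by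
        rw [Nat.factorial_succ, ← hchoose, mul_assoc]
    _ ≤ 2 ^ n * 2 ^ n * (k ! * (n - 2 * k)!) := by gcongr
    _ = 4 ^ n * (k ! * (n - 2 * k)!) := by rw [← mul_pow]; norm_num

lemma abs_gegen_le (n : ℕ) (t : ℝ) : |gegen n t| ≤ (8 * (1 + |t|)) ^ n := by
  have hterm : ∀ k ∈ range (n / 2 + 1),
      |(-1 : ℝ) ^ k * (((n - k + 1).factorial : ℝ) / (k.factorial * (n - 2 * k).factorial)) *
        t ^ (n - 2 * k)| ≤ 4 ^ n * (1 + |t|) ^ n := by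
    intro k hk
    have hk : 2 * k ≤ n := by have := mem_range.1 hk; omega
    rw [abs_mul, abs_mul, abs_pow, abs_neg, abs_one, one_pow, one_mul, abs_pow,
      abs_of_nonneg (by positivity)]
    gcongr
    · rw [div_le_iff₀ (by positivity)]
      exact_mod_cast factorial_sub_add_one_le hk
    · calc |t| ^ (n - 2 * k) ≤ (1 + |t|) ^ (n - 2 * k) := by gcongr; linarith
        _ ≤ (1 + |t|) ^ n := pow_le_pow_right₀ (by linarith [abs_nonneg t]) (by omega)
  have hcard : ((n / 2 + 1 : ℕ) : ℝ) ≤ 2 ^ n := by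
    exact_mod_cast (show n / 2 + 1 ≤ n + 1 by omega).trans n.lt_two_pow_self
  calc |gegen n t| ≤ ∑ k ∈ range (n / 2 + 1), 4 ^ n * (1 + |t|) ^ n :=
        (abs_sum_le_sum_abs _ _).trans (sum_le_sum hterm)
    _ = ((n / 2 + 1 : ℕ) : ℝ) * (4 ^ n * (1 + |t|) ^ n) := by
        rw [sum_const, card_range, nsmul_eq_mul]
    _ ≤ 2 ^ n * (4 ^ n * (1 + |t|) ^ n) := by gcongr
    _ = (8 * (1 + |t|)) ^ n := by rw [mul_pow, ← mul_assoc, ← mul_pow]; norm_num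

lemma pow_le_rpow_mul_exp {K : ℝ} (hK : 0 < K) {s : ℝ} (hs : 0 ≤ s) (n : ℕ) :
    s ^ n ≤ ((n : ℝ) / K) ^ ((n : ℝ) / 2) * (exp (2 * K * s ^ 2) * (1 / 2) ^ n) := by
  have hsq : (((n : ℝ) / K) ^ ((n : ℝ) / 2)) ^ 2 = ((n : ℝ) / K) ^ n := by
    rw [← Real.rpow_mul_natCast (by positivity), ← Real.rpow_natCast]
    congr 1; push_cast; ring
  have hexp : (4 * K * s ^ 2) ^ n ≤ (n : ℝ) ^ n * exp (4 * K * s ^ 2) := by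
    have h := pow_div_factorial_le_exp (x := 4 * K * s ^ 2) (by positivity) n
    rw [div_le_iff₀ (by positivity)] at h
    calc _ ≤ exp (4 * K * s ^ 2) * n.factorial := h
      _ ≤ exp (4 * K * s ^ 2) * (n : ℝ) ^ n := by gcongr; exact_mod_cast n.factorial_le_pow
      _ = _ := mul_comm _ _
  rw [← pow_le_pow_iff_left₀ (by positivity) (by positivity) two_ne_zero, mul_pow, hsq]
  calc (s ^ n) ^ 2 = (4 * K * s ^ 2) ^ n * (1 / (4 * K)) ^ n := by
        rw [← mul_pow, ← pow_mul, mul_comm n 2, pow_mul]; field_simp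
    _ ≤ (n : ℝ) ^ n * exp (4 * K * s ^ 2) * (1 / (4 * K)) ^ n := by gcongr
    _ = ((n : ℝ) / K) ^ n * (exp (2 * K * s ^ 2) * (1 / 2) ^ n) ^ 2 := by
        have hexp2 : exp (2 * K * s ^ 2) ^ 2 = exp (4 * K * s ^ 2) := by
          rw [← exp_nat_mul]; ring_nf
        have hquarter : (1 / (4 * K)) ^ n = (1 / K) ^ n * ((1 / 2) ^ n) ^ 2 := by
          rw [← pow_mul, mul_comm n 2, pow_mul, ← mul_pow]; norm_num
        rw [mul_pow, hexp2, hquarter, div_eq_mul_one_div (n : ℝ) K, mul_pow]; ring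

section GegenbauerSeries

variable {K : ℝ} {a : ℕ → ℂ} {M : ℝ}

lemma norm_mul_gegen_le (hK : 0 < K) (h0 : ‖a 0‖ ≤ M)
    (ha : ∀ n : ℕ, 1 ≤ n → ‖a n‖ * ((n : ℝ) / K) ^ ((n : ℝ) / 2) ≤ M) (t : ℝ) (n : ℕ) :
    ‖a n * (gegen n t : ℂ)‖ ≤ M * exp (2 * K * (8 * (1 + |t|)) ^ 2) * (1 / 2) ^ n := by
  set E := exp (2 * K * (8 * (1 + |t|)) ^ 2)
  rw [norm_mul, Complex.norm_real, Real.norm_eq_abs]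
  rcases Nat.eq_zero_or_pos n with rfl | hn
  · have hM : 0 ≤ M := (norm_nonneg _).trans h0
    rw [gegen_zero, abs_one, mul_one, pow_zero, mul_one]
    exact h0.trans (le_mul_of_one_le_right hM (one_le_exp (by positivity)))
  · calc ‖a n‖ * |gegen n t|
        ≤ ‖a n‖ * (((n : ℝ) / K) ^ ((n : ℝ) / 2) * (E * (1 / 2) ^ n)) := by
          gcongr; exact (abs_gegen_le n t).trans (pow_le_rpow_mul_exp hK (by positivity) n)
      _ = (‖a n‖ * ((n : ℝ) / K) ^ ((n : ℝ) / 2)) * (E * (1 / 2) ^ n) := by ring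
      _ ≤ M * (E * (1 / 2) ^ n) := by gcongr; exact ha n hn
      _ = M * E * (1 / 2) ^ n := by ring

lemma summable_and_norm_tsum_mul_gegen_le (hK : 0 < K) (h0 : ‖a 0‖ ≤ M)
    (ha : ∀ n : ℕ, 1 ≤ n → ‖a n‖ * ((n : ℝ) / K) ^ ((n : ℝ) / 2) ≤ M) (t : ℝ) :
    Summable (fun n => a n * (gegen n t : ℂ)) ∧
      ‖∑' n, a n * (gegen n t : ℂ)‖ ≤ 2 * exp (256 * K) * M * exp (256 * K * t ^ 2) := by
  have hM : 0 ≤ M := (norm_nonneg _).trans h0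
  set E := exp (2 * K * (8 * (1 + |t|)) ^ 2)
  have hgeom : HasSum (fun n => M * E * (1 / 2) ^ n) (M * E * 2) :=
    hasSum_geometric_two.mul_left _
  have hterm := norm_mul_gegen_le hK h0 ha t
  refine ⟨hgeom.summable.of_norm_bounded hterm, ?_⟩
  have hE : E ≤ exp (256 * K) * exp (256 * K * t ^ 2) := by
    rw [← exp_add, exp_le_exp]
    nlinarith [sq_abs t, sq_nonneg (1 - |t|)]
  calc ‖∑' n, a n * (gegen n t : ℂ)‖ ≤ M * E * 2 := tsum_of_norm_bounded hgeom hterm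
    _ ≤ M * (exp (256 * K) * exp (256 * K * t ^ 2)) * 2 := by gcongr
    _ = 2 * exp (256 * K) * M * exp (256 * K * t ^ 2) := by ring

end GegenbauerSeries

open Polynomial in
lemma hermN_eq_aeval_hermite (N k : ℕ) (x : ℝ) :
    hermN N k x = √N ^ k * aeval (√N * x) (hermite k) := by
  have hgauss : (fun y : ℝ => exp (-(N * y ^ 2) / 2)) =
      fun y => exp (-((√N * y) ^ 2 / 2)) := by
    funext y; rw [mul_pow, Real.sq_sqrt (Nat.cast_nonneg N)]; ring_nf
  have hsmooth : ContDiff ℝ k fun y : ℝ => exp (-(y ^ 2 / 2)) := by fun_prop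
  rw [hermN, hgauss, congrFun (iteratedDeriv_comp_const_mul hsmooth √N) x,
    iteratedDeriv_eq_iterate, deriv_gaussian_eq_hermite_mul_gaussian]
  have hcancel : exp (N * x ^ 2 / 2) * exp (-((√N * x) ^ 2 / 2)) = 1 := by
    rw [← exp_add, mul_pow, Real.sq_sqrt (Nat.cast_nonneg N)]; ring_nf; exact exp_zero
  have hsign : ((-1 : ℝ) ^ k) ^ 2 = 1 := by rw [← pow_mul, mul_comm, pow_mul]; simp
  linear_combination (√N ^ k * aeval (√N * x) (hermite k)) *
    (((-1 : ℝ) ^ k) ^ 2 * hcancel + hsign)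

open Polynomial in
lemma exists_polynomial_htilde_eq (N k : ℕ) : ∃ p : ℝ[X], ∀ x, htilde N k x = p.eval x := by
  refine ⟨C (√N ^ k / √(k.factorial * N ^ k * √(2 * π / N))) *
    ((hermite k).map (Int.castRingHom ℝ)).comp (C √N * X), fun x => ?_⟩
  simp only [htilde, hermN_eq_aeval_hermite, aeval_def, eval₂_eq_eval_map, eval_mul, eval_C,
    eval_comp, eval_X, algebraMap_int_eq]
  ring

lemma Polynomial.integrable_eval_mul_exp_neg_mul_sq (p : Polynomial ℝ) {b : ℝ} (hb : 0 < b) :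
    Integrable fun x => p.eval x * exp (-b * x ^ 2) := by
  simp_rw [Polynomial.eval_eq_sum_range, sum_mul, mul_assoc]
  refine integrable_finsetSum _ fun i _ => Integrable.const_mul ?_ _
  simpa only [Real.rpow_natCast] using
    integrable_rpow_mul_exp_neg_mul_sq hb (s := i) (by linarith [i.cast_nonneg (α := ℝ)])

lemma continuous_gueDensity (N : ℕ) : Continuous (gueDensity N) := by
  choose p hp using exists_polynomial_htilde_eq N
  have hpoly : gueDensity N = fun t =>
      (1 / N) * exp (-(N * t ^ 2) / 2) * ∑ k ∈ range N, (p k).eval t ^ 2 :=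
    funext fun t => by simp only [gueDensity, hp]
  rw [hpoly]
  fun_prop

lemma gueDensity_nonneg (N : ℕ) (t : ℝ) : 0 ≤ gueDensity N t := by
  unfold gueDensity; positivity

lemma integrable_exp_mul_sq_mul_gueDensity {N : ℕ} {c : ℝ} (hc : c < N / 2) :
    Integrable fun t => exp (c * t ^ 2) * gueDensity N t := by
  choose p hp using exists_polynomial_htilde_eq N
  have hexpand : (fun t => exp (c * t ^ 2) * gueDensity N t) = fun t =>
      ∑ k ∈ range N, (1 / N : ℝ) * ((p k ^ 2).eval t * exp (-(N / 2 - c) * t ^ 2)) := by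
    funext t
    simp only [gueDensity, hp, Polynomial.eval_pow, mul_sum]
    refine sum_congr rfl fun k _ => ?_
    rw [show -(N / 2 - c) * t ^ 2 = c * t ^ 2 + -(N * t ^ 2) / 2 by ring, exp_add]
    ring
  rw [hexpand]
  exact integrable_finsetSum _ fun k _ =>
    ((p k ^ 2).integrable_eval_mul_exp_neg_mul_sq (by linarith)).const_mul _

lemma aestronglyMeasurable_tsum {α E : Type*} [MeasurableSpace α] {μ : Measure α}
    [NormedAddCommGroup E] {f : ℕ → α → E} (hf : ∀ n, AEStronglyMeasurable (f n) μ)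
    (hs : ∀ x, Summable fun n => f n x) : AEStronglyMeasurable (fun x => ∑' n, f n x) μ :=
  aestronglyMeasurable_of_tendsto_ae atTop
    (fun m => Finset.aestronglyMeasurable_fun_sum (range m) fun n _ => hf n)
    (ae_of_all _ fun x => (hs x).hasSum.tendsto_sum_nat)

lemma integrable_norm_mul_and_norm_integral_le {α 𝕜 : Type*} [MeasurableSpace α]
    {μ : Measure α} [RCLike 𝕜] {f : α → 𝕜} {ρ w : α → ℝ} {A : ℝ}
    (hf : AEStronglyMeasurable f μ) (hρm : AEStronglyMeasurable ρ μ) (hρ : ∀ x, 0 ≤ ρ x)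
    (hfw : ∀ x, ‖f x‖ ≤ A * w x) (hw : Integrable (fun x => w x * ρ x) μ) :
    Integrable (fun x => ‖f x‖ * ρ x) μ ∧ ‖∫ x, f x * (ρ x : 𝕜) ∂μ‖ ≤ A * ∫ x, w x * ρ x ∂μ := by
  have hbound : ∀ x, ‖f x‖ * ρ x ≤ A * (w x * ρ x) := fun x => by
    rw [← mul_assoc]; exact mul_le_mul_of_nonneg_right (hfw x) (hρ x)
  have hint : Integrable (fun x => ‖f x‖ * ρ x) μ :=
    (hw.const_mul A).mono' (hf.norm.mul hρm) (ae_of_all _ fun x => by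
      rw [Real.norm_of_nonneg (mul_nonneg (norm_nonneg _) (hρ x))]; exact hbound x)
  refine ⟨hint, ?_⟩
  calc ‖∫ x, f x * (ρ x : 𝕜) ∂μ‖ ≤ ∫ x, ‖f x‖ * ρ x ∂μ := by
        refine (norm_integral_le_integral_norm _).trans_eq (integral_congr_ae (ae_of_all _ ?_))
        intro x
        simp only [norm_mul, RCLike.norm_ofReal, abs_of_nonneg (hρ x)]
    _ ≤ ∫ x, A * (w x * ρ x) ∂μ := integral_mono hint (hw.const_mul A) hbound
    _ = A * ∫ x, w x * ρ x ∂μ := integral_const_mul A _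

theorem integral_against_density_bound (K : ℝ) (hK : 0 < K) :
    ∃ N₀ : ℕ, ∀ N : ℕ, N₀ < N → ∃ C : ℝ,
      ∀ (a : ℕ → ℂ) (M : ℝ),
        (‖a 0‖ ≤ M ∧
          ∀ n : ℕ, 1 ≤ n → ‖a n‖ * ((n : ℝ) / K) ^ ((n : ℝ) / 2) ≤ M) →
        (∀ t : ℝ, Summable (fun n : ℕ => a n * (gegen n t : ℂ))) ∧
        Integrable (fun t : ℝ =>
          ‖∑' n : ℕ, a n * (gegen n t : ℂ)‖ * gueDensity N t) ∧
        ‖∫ t : ℝ, (∑' n : ℕ, a n * (gegen n t : ℂ)) * (gueDensity N t : ℂ)‖ ≤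
          C * M := by
  refine ⟨⌈512 * K⌉₊, fun N hN => ?_⟩
  have hweight : 256 * K < N / 2 := by linarith [Nat.lt_of_ceil_lt hN]
  refine ⟨2 * exp (256 * K) * ∫ t, exp (256 * K * t ^ 2) * gueDensity N t,
    fun a M ⟨h0, ha⟩ => ?_⟩
  have hseries := summable_and_norm_tsum_mul_gegen_le hK h0 ha
  have hmeas : AEStronglyMeasurable (fun t => ∑' n, a n * (gegen n t : ℂ)) :=
    aestronglyMeasurable_tsum
      (fun n => (continuous_const.mul
        (Complex.continuous_ofReal.comp (continuous_gegen n))).aestronglyMeasurable)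
      fun t => (hseries t).1
  obtain ⟨hint, hbound⟩ := integrable_norm_mul_and_norm_integral_le hmeas
    (continuous_gueDensity N).aestronglyMeasurable (gueDensity_nonneg N)
    (fun t => (hseries t).2) (integrable_exp_mul_sq_mul_gueDensity hweight)
  exact ⟨fun t => (hseries t).1, hint, hbound.trans_eq (by ring)⟩
end
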